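/- Let ξ be standard exponential, S_t := 1_{ξ > t} e^t a P-martingale on [0,T], and Q the measure with dQ/dP := S_T = 1_{ξ > T} e^T. Then Q(ξ > T) = 1, and under Q the process S equals (e^t)_{t∈[0,T]} a.s.; in particular S is Q-a.s. strictly increasing, so S admits an increasing profit under Q (the buy-and-hold strategy H ≡ 1 yields a nondecreasing gains process (H·S)_t = S_t - S_0 with Q((H·S)_T > 0) = 1). -/

import Mathlib

open MeasureTheory ProbabilityTheory Filter Set Function ENNReal

noncomputable section

variable {Ω : Type*}

/-- The natural filtration of the single-jump indicator process `t ↦ 1_{ξ ≤ t}`. -/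
def natFilt [MeasurableSpace Ω] (ξ : Ω → ℝ) (t : ℝ) : MeasurableSpace Ω :=
  ⨆ s ∈ Set.Iic t, MeasurableSpace.comap
    (fun ω => if ξ ω ≤ s then (1:ℝ) else 0) (borel ℝ)

/-- The right-continuous filtration generated by the process `1_{ξ ≤ ·}`. -/
def natFiltPlus [MeasurableSpace Ω] (ξ : Ω → ℝ) (t : ℝ) : MeasurableSpace Ω :=
  ⨅ u ∈ Set.Ioi t, natFilt ξ u

/-- The single-jump process `S_t = 1_{ξ > t} e^t`. -/
def jumpProc (ξ : Ω → ℝ) (t : ℝ) (ω : Ω) : ℝ :=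
  if t < ξ ω then Real.exp t else 0

/-! The density `S_T` is the constant `e^T` on `{ξ > T}` and vanishes elsewhere, so
`Q = e^T • P|_{ξ > T}`. Since `P(ξ > T) = e^{-T}`, `Q` is a probability measure carried
by `{ξ > T}`, and there every path `t ↦ S_t`, `t ∈ [0, T]`, is the deterministic curve `e^t`. -/

lemma measure_eq_one_of_ae {α : Type*} [MeasurableSpace α] {μ : Measure α}
    [IsProbabilityMeasure μ] {p : α → Prop} (h : ∀ᵐ a ∂μ, p a) : μ {a | p a} = 1 :=
  (measure_congr (ae_eq_univ.2 h)).trans measure_univ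

lemma jumpProc_of_lt {ξ : Ω → ℝ} {t : ℝ} {ω : Ω} (h : t < ξ ω) :
    jumpProc ξ t ω = Real.exp t :=
  if_pos h

lemma ofReal_jumpProc_eq_indicator (ξ : Ω → ℝ) (T : ℝ) :
    (fun ω => ENNReal.ofReal (jumpProc ξ T ω))
      = {ω | T < ξ ω}.indicator fun _ => ENNReal.ofReal (Real.exp T) := by
  ext ω
  by_cases h : T < ξ ω <;> simp [jumpProc, h]

section

variable [MeasurableSpace Ω] {P : Measure Ω} {ξ : Ω → ℝ} {T : ℝ}

lemma withDensity_ofReal_jumpProc (hξ : Measurable ξ) :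
    P.withDensity (fun ω => ENNReal.ofReal (jumpProc ξ T ω))
      = ENNReal.ofReal (Real.exp T) • P.restrict {ω | T < ξ ω} := by
  rw [ofReal_jumpProc_eq_indicator, withDensity_indicator (measurableSet_lt measurable_const hξ),
    withDensity_const]

lemma ae_withDensity_ofReal_jumpProc_lt (hξ : Measurable ξ) :
    ∀ᵐ ω ∂(P.withDensity fun ω => ENNReal.ofReal (jumpProc ξ T ω)), T < ξ ω := by
  rw [withDensity_ofReal_jumpProc hξ]
  exact Measure.ae_smul_measure (ae_restrict_mem (measurableSet_lt measurable_const hξ)) _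

lemma isProbabilityMeasure_withDensity_ofReal_jumpProc (hξ : Measurable ξ)
    (hT : P {ω | T < ξ ω} = ENNReal.ofReal (Real.exp (-T))) :
    IsProbabilityMeasure (P.withDensity fun ω => ENNReal.ofReal (jumpProc ξ T ω)) := by
  constructor
  rw [withDensity_ofReal_jumpProc hξ, Measure.smul_apply, Measure.restrict_apply_univ, hT,
    smul_eq_mul, ← ENNReal.ofReal_mul (Real.exp_nonneg T), ← Real.exp_add, add_neg_cancel,
    Real.exp_zero, ENNReal.ofReal_one]

lemma ae_withDensity_ofReal_jumpProc_eq_exp (hξ : Measurable ξ) :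
    ∀ᵐ ω ∂(P.withDensity fun ω => ENNReal.ofReal (jumpProc ξ T ω)),
      ∀ t ∈ Set.Icc (0:ℝ) T, jumpProc ξ t ω = Real.exp t := by
  filter_upwards [ae_withDensity_ofReal_jumpProc_lt hξ] with ω hω t ht
  exact jumpProc_of_lt (ht.2.trans_lt hω)

end

theorem jump_process_increasing_profit_general {mΩ : MeasurableSpace Ω}
    (P : Measure Ω) (ξ : Ω → ℝ) (hξ : Measurable ξ)
    (hexp : ∀ t : ℝ, 0 ≤ t → P {ω | t < ξ ω} = ENNReal.ofReal (Real.exp (-t)))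
    (T : ℝ) (hT : 0 < T) :
    (P.withDensity (fun ω => ENNReal.ofReal (jumpProc ξ T ω)) {ω | T < ξ ω} = 1) ∧
    (∀ᵐ ω ∂(P.withDensity fun ω => ENNReal.ofReal (jumpProc ξ T ω)),
      ∀ t ∈ Set.Icc (0:ℝ) T, jumpProc ξ t ω = Real.exp t) ∧
    (∀ᵐ ω ∂(P.withDensity fun ω => ENNReal.ofReal (jumpProc ξ T ω)),
      StrictMonoOn (fun t => jumpProc ξ t ω) (Set.Icc (0:ℝ) T)) ∧
    (∀ᵐ ω ∂(P.withDensity fun ω => ENNReal.ofReal (jumpProc ξ T ω)),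
      MonotoneOn (fun t => jumpProc ξ t ω - jumpProc ξ 0 ω) (Set.Icc (0:ℝ) T)) ∧
    (P.withDensity (fun ω => ENNReal.ofReal (jumpProc ξ T ω))
      {ω | 0 < jumpProc ξ T ω - jumpProc ξ 0 ω} = 1) := by
  have := isProbabilityMeasure_withDensity_ofReal_jumpProc hξ (hexp T hT.le)
  have hS := ae_withDensity_ofReal_jumpProc_eq_exp (P := P) (T := T) hξ
  have hstrict : ∀ᵐ ω ∂(P.withDensity fun ω => ENNReal.ofReal (jumpProc ξ T ω)),
      StrictMonoOn (fun t => jumpProc ξ t ω) (Set.Icc (0:ℝ) T) := by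
    filter_upwards [hS] with ω hω
    exact Real.exp_strictMono.strictMonoOn _ |>.congr fun t ht => (hω t ht).symm
  refine ⟨measure_eq_one_of_ae (ae_withDensity_ofReal_jumpProc_lt hξ), hS, hstrict, ?_, ?_⟩
  · filter_upwards [hstrict] with ω hω
    simpa only [sub_eq_add_neg] using hω.monotoneOn.add_const (-jumpProc ξ 0 ω)
  · refine measure_eq_one_of_ae ?_
    filter_upwards [hS] with ω hω
    rw [hω T ⟨hT.le, le_rfl⟩, hω 0 ⟨le_rfl, hT.le⟩, sub_pos]
    exact Real.exp_lt_exp.2 hT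

/-- Let `ξ` be standard exponential, `S_t = 1_{ξ > t} e^t` on `[0,T]`, and `Q` the
measure with `dQ/dP = S_T = 1_{ξ > T} e^T`. Then `Q(ξ > T) = 1` and under `Q` the
process `S` equals `(e^t)_{t ∈ [0,T]}` a.s.; in particular `S` is `Q`-a.s. strictly
increasing on `[0,T]`, so `S` admits an increasing profit under `Q`: the buy-and-hold
strategy `H ≡ 1` yields a nondecreasing gains process `(H·S)_t = S_t - S_0` with
`Q((H·S)_T > 0) = 1`. -/
theorem jump_process_increasing_profit {mΩ : MeasurableSpace Ω}
    (P : Measure Ω) [IsProbabilityMeasure P] (ξ : Ω → ℝ) (hξ : Measurable ξ)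
    (hexp : ∀ t : ℝ, 0 ≤ t → P {ω | t < ξ ω} = ENNReal.ofReal (Real.exp (-t)))
    (T : ℝ) (hT : 0 < T) :
    (P.withDensity (fun ω => ENNReal.ofReal (jumpProc ξ T ω)) {ω | T < ξ ω} = 1) ∧
    (∀ᵐ ω ∂(P.withDensity fun ω => ENNReal.ofReal (jumpProc ξ T ω)),
      ∀ t ∈ Set.Icc (0:ℝ) T, jumpProc ξ t ω = Real.exp t) ∧
    (∀ᵐ ω ∂(P.withDensity fun ω => ENNReal.ofReal (jumpProc ξ T ω)),
      StrictMonoOn (fun t => jumpProc ξ t ω) (Set.Icc (0:ℝ) T)) ∧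
    (∀ᵐ ω ∂(P.withDensity fun ω => ENNReal.ofReal (jumpProc ξ T ω)),
      MonotoneOn (fun t => jumpProc ξ t ω - jumpProc ξ 0 ω) (Set.Icc (0:ℝ) T)) ∧
    (P.withDensity (fun ω => ENNReal.ofReal (jumpProc ξ T ω))
      {ω | 0 < jumpProc ξ T ω - jumpProc ξ 0 ω} = 1) :=
  jump_process_increasing_profit_general (mΩ := mΩ) P ξ hξ hexp T hT
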